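/- Let N ≥ 1 and let x_0, x_1, …, x_N be pairwise distinct real numbers, and let W be the (N+1)×(N+1) differentiation matrix with entries W_{ij} = ℓ_j'(x_i), where ℓ_j is the j-th Lagrange basis polynomial. Then for every n ≥ 1, the n-th matrix power of W realizes the n-th derivative on polynomials of degree at most N: for every real polynomial p with deg p ≤ N, if v is the vector with v_j = p(x_j), then for every index i, (Wⁿ v)_i = p^{(n)}(x_i). In particular the n-th order differential-quadrature weight matrix w^{(n)}_{ij} = ℓ_j^{(n)}(x_i) acts on such nodal-value vectors identically to Wⁿ. -/

import Mathlib

/-!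
A polynomial of degree at most `N` is its own Lagrange interpolant on `N + 1` distinct nodes, so
differentiating the interpolation formula `n` times shows that the weight matrix
`w⁽ⁿ⁾ᵢⱼ = ℓⱼ⁽ⁿ⁾(xᵢ)` maps nodal values of `p` to nodal values of `p⁽ⁿ⁾`. Since differentiation
does not raise the degree, iterating the case `n = 1` shows that `Wⁿ` does the same.
-/

open Polynomial Finset Matrix

namespace Lagrange

variable {F ι : Type*} [Field F] [Fintype ι] [DecidableEq ι]

noncomputable def diffQuadMatrix (v : ι → F) (n : ℕ) : Matrix ι ι F :=
  Matrix.of fun i j => (derivative^[n] (Lagrange.basis univ v j)).eval (v i)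

theorem iterate_derivative_eval_eq_sum_basis {v : ι → F} (hv : Function.Injective v)
    {q : F[X]} (hq : q.degree < Fintype.card ι) (n : ℕ) (y : F) :
    (derivative^[n] q).eval y =
      ∑ j, (derivative^[n] (Lagrange.basis univ v j)).eval y * q.eval (v j) := by
  have hinterp : q = interpolate univ v (fun j => q.eval (v j)) :=
    eq_interpolate hv.injOn (by rwa [card_univ])
  conv_lhs => rw [hinterp, interpolate_apply, iterate_derivative_sum, eval_finsetSum]
  refine sum_congr rfl fun j _ => ?_
  rw [iterate_derivative_C_mul, eval_mul, eval_C, mul_comm]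

theorem diffQuadMatrix_mulVec {v : ι → F} (hv : Function.Injective v)
    {q : F[X]} (hq : q.degree < Fintype.card ι) (n : ℕ) :
    diffQuadMatrix v n *ᵥ (fun j => q.eval (v j)) = fun i => (derivative^[n] q).eval (v i) := by
  ext i
  rw [iterate_derivative_eval_eq_sum_basis hv hq]
  rfl

theorem diffQuadMatrix_one_pow_mulVec {v : ι → F} (hv : Function.Injective v)
    {q : F[X]} (hq : q.degree < Fintype.card ι) (n : ℕ) :
    diffQuadMatrix v 1 ^ n *ᵥ (fun j => q.eval (v j)) = fun i => (derivative^[n] q).eval (v i) := by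
  induction n generalizing q with
  | zero => simp
  | succ n ih =>
    rw [pow_succ, ← mulVec_mulVec, diffQuadMatrix_mulVec hv hq, Function.iterate_one,
      ih (degree_derivative_le.trans_lt hq), Function.iterate_succ_apply]

end Lagrange

theorem dq_matrix_power_realizes_derivative_general (N : ℕ)
    (x : Fin (N + 1) → ℝ) (hx : Function.Injective x)
    (W : Matrix (Fin (N + 1)) (Fin (N + 1)) ℝ)
    (hW : ∀ i j, W i j = (Polynomial.derivative (Lagrange.basis Finset.univ x j)).eval (x i))
    (n : ℕ)
    (p : ℝ[X]) (hp : p.degree ≤ N) (i : Fin (N + 1)) :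
    (W ^ n).mulVec (fun j => p.eval (x j)) i =
      ((Polynomial.derivative)^[n] p).eval (x i) ∧
    (Matrix.of fun i j =>
        ((Polynomial.derivative)^[n] (Lagrange.basis Finset.univ x j)).eval (x i)).mulVec
        (fun j => p.eval (x j)) i =
      (W ^ n).mulVec (fun j => p.eval (x j)) i := by
  have hW_eq : W = Lagrange.diffQuadMatrix x 1 := Matrix.ext hW
  have hdeg : p.degree < Fintype.card (Fin (N + 1)) := by
    rw [Fintype.card_fin]
    exact hp.trans_lt (by exact_mod_cast N.lt_succ_self)
  have hpow := congrFun (Lagrange.diffQuadMatrix_one_pow_mulVec hx hdeg n) i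
  have hweights := congrFun (Lagrange.diffQuadMatrix_mulVec hx hdeg n) i
  rw [← hW_eq] at hpow
  exact ⟨hpow, hweights.trans hpow.symm⟩

/-- With differentiation matrix `W i j = ℓⱼ'(xᵢ)` for pairwise distinct
nodes, for every `n ≥ 1` the matrix power `Wⁿ` realizes the `n`-th derivative on
polynomials of degree at most `N`: if `v j = p(xⱼ)` then `(Wⁿ v)ᵢ = p⁽ⁿ⁾(xᵢ)`;
in particular the `n`-th order weight matrix `w⁽ⁿ⁾ᵢⱼ = ℓⱼ⁽ⁿ⁾(xᵢ)` acts on such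
nodal-value vectors identically to `Wⁿ`. -/
theorem dq_matrix_power_realizes_derivative (N : ℕ) (hN : 1 ≤ N)
    (x : Fin (N + 1) → ℝ) (hx : Function.Injective x)
    (W : Matrix (Fin (N + 1)) (Fin (N + 1)) ℝ)
    (hW : ∀ i j, W i j = (Polynomial.derivative (Lagrange.basis Finset.univ x j)).eval (x i))
    (n : ℕ) (hn : 1 ≤ n)
    (p : ℝ[X]) (hp : p.degree ≤ N) (i : Fin (N + 1)) :
    (W ^ n).mulVec (fun j => p.eval (x j)) i =
      ((Polynomial.derivative)^[n] p).eval (x i) ∧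
    (Matrix.of fun i j =>
        ((Polynomial.derivative)^[n] (Lagrange.basis Finset.univ x j)).eval (x i)).mulVec
        (fun j => p.eval (x j)) i =
      (W ^ n).mulVec (fun j => p.eval (x j)) i :=
  dq_matrix_power_realizes_derivative_general N x hx W hW n p hp i
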